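/- arXiv:2202.06586 — 3 statements merged into one kernel-verified Lean document; each statement's English description precedes it below -/
import Mathlib

section
/- Let H be a Hilbert space, A a self-adjoint operator on H, B a bounded self-adjoint nonnegative operator with B ≤ A + M for some constant M ≥ 0 (in the sense of quadratic forms). Then for z ∈ ℂ \ ℝ, ‖B(A - z)^{-1}‖ ≤ ‖B‖^{1/2} · ‖B^{1/2}(A - z)^{-1}‖, and ‖B^{1/2}(A - z)^{-1}‖ is bounded by a constant depending only on z and M. -/
open scoped InnerProductSpace

/-!
For `x` in the domain of `A` put `y = (A - z) x`. Since `⟪x, A x⟫` is real,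
`Im ⟪x, y⟫ = -Im z ‖x‖²`, so `‖x‖ ≤ |Im z|⁻¹ ‖y‖`; and `Re ⟪x, A x⟫ = Re ⟪x, y⟫ + Re z ‖x‖²`.
Together with the form bound this gives `Re ⟪x, B x⟫ ≤ K ‖y‖²` with `K` depending only on `z`
and `M`. Taking `x = R y` and `B = S²` yields `‖S R y‖² = Re ⟪R y, B R y⟫ ≤ K ‖y‖²`.
The first estimate is `‖S S R‖ ≤ ‖S‖ ‖S R‖` together with the C⋆-identity `‖S‖² = ‖S S‖`.
-/

variable {E : Type*} [NormedAddCommGroup E] [InnerProductSpace ℂ E]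

theorem IsSelfAdjoint.isFormalAdjoint_self [CompleteSpace E] {A : E →ₗ.[ℂ] E}
    (hA : IsSelfAdjoint A) : A.IsFormalAdjoint A := by
  have h := LinearPMap.adjoint_isFormalAdjoint hA.dense_domain
  rwa [LinearPMap.isSelfAdjoint_def.mp hA] at h

namespace LinearPMap

variable {A : E →ₗ.[ℂ] E}

theorem IsFormalAdjoint.im_inner_self_apply (hA : A.IsFormalAdjoint A) (x : A.domain) :
    (⟪(x : E), A x⟫_ℂ).im = 0 :=
  Complex.conj_eq_iff_im.mp <| by rw [inner_conj_symm]; exact hA x x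

theorem inner_apply_sub_smul (A : E →ₗ.[ℂ] E) (z : ℂ) (x : A.domain) :
    ⟪(x : E), A x - z • (x : E)⟫_ℂ = ⟪(x : E), A x⟫_ℂ - z * ((‖(x : E)‖ ^ 2 : ℝ) : ℂ) := by
  rw [inner_sub_right, inner_smul_right, inner_self_eq_norm_sq_to_K]
  push_cast
  rfl

theorem IsFormalAdjoint.abs_im_mul_norm_le (hA : A.IsFormalAdjoint A) (z : ℂ) (x : A.domain) :
    |z.im| * ‖(x : E)‖ ≤ ‖A x - z • (x : E)‖ := by
  have key : |z.im| * ‖(x : E)‖ * ‖(x : E)‖ ≤ ‖A x - z • (x : E)‖ * ‖(x : E)‖ :=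
    calc |z.im| * ‖(x : E)‖ * ‖(x : E)‖ = |(⟪(x : E), A x - z • (x : E)⟫_ℂ).im| := by
          rw [inner_apply_sub_smul, Complex.sub_im, hA.im_inner_self_apply, Complex.mul_im,
            Complex.ofReal_re, Complex.ofReal_im, mul_zero, zero_add, zero_sub, abs_neg, abs_mul, abs_sq]
          ring
      _ ≤ ‖⟪(x : E), A x - z • (x : E)⟫_ℂ‖ := Complex.abs_im_le_norm _
      _ ≤ ‖(x : E)‖ * ‖A x - z • (x : E)‖ := norm_inner_le_norm _ _
      _ = ‖A x - z • (x : E)‖ * ‖(x : E)‖ := mul_comm _ _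
  rcases (norm_nonneg (x : E)).eq_or_lt with hx | hx
  · rw [← hx, mul_zero]
    exact norm_nonneg _
  · exact le_of_mul_le_mul_right key hx

theorem IsFormalAdjoint.norm_le_inv_abs_im_mul (hA : A.IsFormalAdjoint A) {z : ℂ}
    (hz : z.im ≠ 0) (x : A.domain) :
    ‖(x : E)‖ ≤ |z.im|⁻¹ * ‖A x - z • (x : E)‖ := by
  rw [← div_eq_inv_mul, le_div_iff₀' (abs_pos.mpr hz)]
  exact hA.abs_im_mul_norm_le z x

theorem re_inner_apply_le (A : E →ₗ.[ℂ] E) (z : ℂ) (x : A.domain) :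
    (⟪(x : E), A x⟫_ℂ).re ≤ ‖(x : E)‖ * ‖A x - z • (x : E)‖ + |z.re| * ‖(x : E)‖ ^ 2 := by
  have hsplit : (⟪(x : E), A x⟫_ℂ).re =
      (⟪(x : E), A x - z • (x : E)⟫_ℂ).re + z.re * ‖(x : E)‖ ^ 2 := by
    rw [inner_apply_sub_smul, Complex.sub_re, Complex.mul_re, Complex.ofReal_re,
      Complex.ofReal_im]
    ring
  rw [hsplit]
  gcongr
  · exact (Complex.re_le_norm _).trans (norm_inner_le_norm _ _)
  · exact le_abs_self _

end LinearPMap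

noncomputable def formResolventConst (z : ℂ) (M : ℝ) : ℝ :=
  |z.im|⁻¹ + (|z.re| + M) * |z.im|⁻¹ ^ 2

theorem formResolventConst_pos {z : ℂ} (hz : z.im ≠ 0) {M : ℝ} (hM : 0 ≤ M) :
    0 < formResolventConst z M :=
  add_pos_of_pos_of_nonneg (inv_pos.mpr (abs_pos.mpr hz)) (by positivity)

theorem LinearPMap.IsFormalAdjoint.re_inner_le_of_form_le {A : E →ₗ.[ℂ] E}
    (hA : A.IsFormalAdjoint A) {z : ℂ} (hz : z.im ≠ 0) {M : ℝ} (hM : 0 ≤ M) {B : E →L[ℂ] E}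
    (hform : ∀ x : A.domain,
      (⟪(x : E), B x⟫_ℂ).re ≤ (⟪(x : E), A x⟫_ℂ).re + M * ‖(x : E)‖ ^ 2)
    (x : A.domain) :
    (⟪(x : E), B x⟫_ℂ).re ≤ formResolventConst z M * ‖A x - z • (x : E)‖ ^ 2 := by
  have hx := hA.norm_le_inv_abs_im_mul hz x
  calc (⟪(x : E), B x⟫_ℂ).re
      ≤ ‖(x : E)‖ * ‖A x - z • (x : E)‖ + (|z.re| + M) * ‖(x : E)‖ ^ 2 := by
        linarith [hform x, A.re_inner_apply_le z x]
    _ ≤ |z.im|⁻¹ * ‖A x - z • (x : E)‖ * ‖A x - z • (x : E)‖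
          + (|z.re| + M) * (|z.im|⁻¹ * ‖A x - z • (x : E)‖) ^ 2 := by
        gcongr
    _ = formResolventConst z M * ‖A x - z • (x : E)‖ ^ 2 := by
        rw [formResolventConst]
        ring

theorem LinearPMap.IsFormalAdjoint.norm_comp_resolvent_le [CompleteSpace E] {A : E →ₗ.[ℂ] E}
    (hA : A.IsFormalAdjoint A) {z : ℂ} (hz : z.im ≠ 0) {M : ℝ} (hM : 0 ≤ M) {S R : E →L[ℂ] E}
    (hS : IsSelfAdjoint S)
    (hform : ∀ x : A.domain,
      (⟪(x : E), (S ∘L S) x⟫_ℂ).re ≤ (⟪(x : E), A x⟫_ℂ).re + M * ‖(x : E)‖ ^ 2)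
    (hR : ∀ y : E, ∃ hy : R y ∈ A.domain, A ⟨R y, hy⟩ - z • R y = y) :
    ‖S ∘L R‖ ≤ √(formResolventConst z M) := by
  refine ContinuousLinearMap.opNorm_le_bound _ (Real.sqrt_nonneg _) fun y => ?_
  obtain ⟨hy, hAy⟩ := hR y
  calc ‖S (R y)‖ = √(⟪R y, (S ∘L S) (R y)⟫_ℂ).re := by
        rw [ContinuousLinearMap.apply_norm_eq_sqrt_inner_adjoint_right, hS.adjoint_eq]
        rfl
    _ ≤ √(formResolventConst z M * ‖y‖ ^ 2) := by
        gcongr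
        simpa only [hAy] using hA.re_inner_le_of_form_le hz hM hform ⟨R y, hy⟩
    _ = √(formResolventConst z M) * ‖y‖ := by
        rw [Real.sqrt_mul (formResolventConst_pos hz hM).le, Real.sqrt_sq (norm_nonneg y)]

theorem IsSelfAdjoint.norm_comp_self_comp_le [CompleteSpace E] {F : Type*}
    [NormedAddCommGroup F] [NormedSpace ℂ F] {S : E →L[ℂ] E} (hS : IsSelfAdjoint S)
    (R : F →L[ℂ] E) :
    ‖(S ∘L S) ∘L R‖ ≤ √‖S ∘L S‖ * ‖S ∘L R‖ := by
  rw [ContinuousLinearMap.comp_assoc, ← ContinuousLinearMap.mul_def, hS.norm_mul_self,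
    Real.sqrt_sq (norm_nonneg S)]
  exact ContinuousLinearMap.opNorm_comp_le S (S ∘L R)

/-- let `A` be a self-adjoint (generally unbounded) operator on a Hilbert
space `H`, `B` a bounded self-adjoint nonnegative operator with `B ≤ A + M` in the sense of
quadratic forms (`M ≥ 0`), and `S = B^{1/2}` its square root.  Then for `z ∉ ℝ`, with
`R = (A - z)⁻¹` the resolvent, one has `‖B R‖ ≤ ‖B‖^{1/2} ‖S R‖`, and `‖S R‖` is bounded by
a constant `C` depending only on `z` and `M`. -/
theorem stmt_10 (z : ℂ) (hz : z.im ≠ 0) (M : ℝ) (hM : 0 ≤ M) :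
    ∃ C : ℝ, 0 < C ∧
      ∀ (H : Type) [NormedAddCommGroup H] [InnerProductSpace ℂ H] [CompleteSpace H]
        (A : H →ₗ.[ℂ] H) (B S R : H →L[ℂ] H),
        IsSelfAdjoint A →
        IsSelfAdjoint B →
        (∀ x : H, 0 ≤ (⟪x, B x⟫_ℂ).re) →
        (∀ x : A.domain, (⟪(x : H), B x⟫_ℂ).re ≤ (⟪(x : H), A x⟫_ℂ).re + M * ‖(x : H)‖ ^ 2) →
        IsSelfAdjoint S →
        (∀ x : H, 0 ≤ (⟪x, S x⟫_ℂ).re) →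
        S ∘L S = B →
        (∀ y : H, ∃ hy : R y ∈ A.domain, A ⟨R y, hy⟩ - z • R y = y) →
        (∀ x : A.domain, R (A x - z • (x : H)) = (x : H)) →
        ‖B ∘L R‖ ≤ Real.sqrt ‖B‖ * ‖S ∘L R‖ ∧ ‖S ∘L R‖ ≤ C := by
  refine ⟨√(formResolventConst z M), Real.sqrt_pos.mpr (formResolventConst_pos hz hM), ?_⟩
  intro H _ _ _ A B S R hA _ _ hform hS _ hSS hR _
  subst hSS
  exact ⟨hS.norm_comp_self_comp_le R,
    hA.isFormalAdjoint_self.norm_comp_resolvent_le hz hM hS hform hR⟩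
end

section
/- Let V : ℝ^ν → ℝ be bounded below, ℓ ∈ (0,1], and let H₂ = -Δ_d + V on ℓ²(ℓℤ^ν) (with V acting by multiplication by V(j) at lattice point j), which is self-adjoint. Then for each z ∈ ℂ \ ℝ there is C > 0 independent of ℓ such that ‖Δ_d(H₂ - z)^{-1}‖ ≤ Cℓ^{-1} and ‖V(H₂ - z)^{-1}‖ ≤ Cℓ^{-1}. -/
/-- The Hilbert space `ℓ²(ℤ^ν, ℂ)`, modelling `ℓ²(ℓℤ^ν)` (whose norm differs from this one
only by the constant factor `ℓ^{ν/2}`, which affects no operator norm nor any of the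
inequalities below, since it appears on both sides). -/
abbrev LatticeL2 (ν : ℕ) : Type := lp (fun _ : Fin ν → ℤ => ℂ) 2

/-- The pointwise discrete Laplacian with lattice spacing `ℓ`:
`(Δ_d u)_j = ℓ^{-2} Σ_{|n-j|=ℓ} (u_n - u_j)`, the sum over the `2ν` nearest neighbours. -/
noncomputable def discreteLapPt (ν : ℕ) (ℓ : ℝ) (u : (Fin ν → ℤ) → ℂ) (j : Fin ν → ℤ) : ℂ :=
  (ℓ ^ 2)⁻¹ * ∑ i : Fin ν,
    ((u (j + Pi.single i 1) - u j) + (u (j - Pi.single i 1) - u j))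

/-- The pointwise discrete Schrödinger operator `H₂ = -Δ_d + V` on the lattice `ℓℤ^ν`;
the multiplication potential at the lattice point `j ∈ ℤ^ν` is `V(ℓj)`. -/
noncomputable def discreteSchrodingerPt (ν : ℕ) (ℓ : ℝ) (V : (Fin ν → ℝ) → ℝ)
    (u : (Fin ν → ℤ) → ℂ) (j : Fin ν → ℤ) : ℂ :=
  -discreteLapPt ν ℓ u j + (V (fun i => ℓ * (j i : ℝ)) : ℂ) * u j

/-!
Write `ψ = Rφ`, so that `-Δ_d ψ + Vψ - zψ = φ` and `‖ψ‖ ≤ |Im z|⁻¹ ‖φ‖`. With the forward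
differences `D_i`, `-Δ_d = ℓ⁻² Σ_i D_i^* D_i`; pairing the resolvent equation with `ψ` and taking
real parts bounds the form `⟪ψ, -Δ_d ψ⟫ = ℓ⁻² Σ_i ‖D_i ψ‖²` by `C ‖φ‖²`, because `V` is bounded
below. Since `‖D_i^*‖ ≤ 2`, `‖Δ_d ψ‖ ≤ 2ν ℓ⁻² (Σ_i ‖D_i ψ‖²)^{1/2} ≤ 2ν√C ℓ⁻¹ ‖φ‖`: only one
factor `ℓ⁻¹` survives. Finally `Vψ = φ + Δ_d ψ + zψ`, and `1 ≤ ℓ⁻¹`.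
-/

open scoped ComplexInnerProductSpace

namespace lp

theorem hasSum_norm_sq {ι : Type*} {E : ι → Type*} [∀ i, NormedAddCommGroup (E i)]
    (f : lp E 2) : HasSum (fun i => ‖f i‖ ^ 2) (‖f‖ ^ 2) := by
  have hsum := (lp.memℓp f).summable (p := 2) (by norm_num)
  have htsum := lp.norm_rpow_eq_tsum (p := 2) (by norm_num) f
  simp only [ENNReal.toReal_ofNat, Real.rpow_two] at hsum htsum
  exact htsum ▸ hsum.hasSum

theorem mul_norm_sq_le_re_inner {ι : Type*} {w : ι → ℝ} {m : ℝ} (hw : ∀ i, m ≤ w i)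
    {ψ χ : lp (fun _ : ι => ℂ) 2} (hχ : ∀ i, χ i = w i * ψ i) :
    m * ‖ψ‖ ^ 2 ≤ (⟪ψ, χ⟫).re := by
  have hre : HasSum (fun i => w i * ‖ψ i‖ ^ 2) (⟪ψ, χ⟫).re := by
    convert Complex.hasSum_re (lp.hasSum_inner ψ χ) using 2 with i
    rw [RCLike.inner_apply, hχ, mul_assoc, Complex.mul_conj']
    norm_cast
  exact hasSum_le (fun i => mul_le_mul_of_nonneg_right (hw i) (sq_nonneg _))
    ((hasSum_norm_sq ψ).mul_left m) hre

section Shift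

variable {G : Type*} [AddGroup G] {E : Type*} [NormedAddCommGroup E]

theorem memℓp_comp_addRight (e : G) (f : lp (fun _ : G => E) 2) :
    Memℓp (fun j : G => f (j + e)) 2 := by
  have h := (Equiv.addRight e).summable_iff.mpr ((lp.memℓp f).summable (p := 2) (by norm_num))
  exact memℓp_gen h

noncomputable def shift (e : G) (f : lp (fun _ : G => E) 2) : lp (fun _ : G => E) 2 :=
  ⟨fun j => f (j + e), memℓp_comp_addRight e f⟩

@[simp]
theorem shift_apply (e : G) (f : lp (fun _ : G => E) 2) (j : G) :
    shift e f j = f (j + e) :=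
  rfl

theorem norm_shift (e : G) (f : lp (fun _ : G => E) 2) : ‖shift e f‖ = ‖f‖ := by
  have h := (Equiv.addRight e).hasSum_iff.mpr (hasSum_norm_sq f)
  have hsq : ‖shift e f‖ ^ 2 = ‖f‖ ^ 2 := (hasSum_norm_sq (shift e f)).unique h
  exact (sq_eq_sq₀ (norm_nonneg _) (norm_nonneg _)).mp hsq

theorem inner_shift_neg {𝕜 : Type*} [RCLike 𝕜] [InnerProductSpace 𝕜 E]
    (e : G) (f g : lp (fun _ : G => E) 2) :
    inner 𝕜 f (shift (-e) g) = inner 𝕜 (shift e f) g := by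
  simp only [lp.inner_eq_tsum, shift_apply]
  exact ((Equiv.addRight e).tsum_eq fun j => inner 𝕜 (f j) (g (j + -e))).symm.trans
    (by simp)

end Shift

end lp

theorem form_le_of_add_sub_smul_eq {E : Type*} [NormedAddCommGroup E] [InnerProductSpace ℂ E]
    {ψ φ x y : E} {z : ℂ} {t m : ℝ} (h : x + y - z • ψ = φ) (hx : ⟪ψ, x⟫ = t)
    (hy : m * ‖ψ‖ ^ 2 ≤ (⟪ψ, y⟫).re) : t ≤ ‖ψ‖ * ‖φ‖ + (z.re - m) * ‖ψ‖ ^ 2 := by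
  have hre : (⟪ψ, φ⟫).re = t + (⟪ψ, y⟫).re - z.re * ‖ψ‖ ^ 2 := by
    rw [← h, inner_sub_right, inner_add_right, inner_smul_right, hx,
      inner_self_eq_norm_sq_to_K]
    simp [← Complex.ofReal_pow]
  have hφ : (⟪ψ, φ⟫).re ≤ ‖ψ‖ * ‖φ‖ := (Complex.re_le_norm _).trans (norm_inner_le_norm ψ φ)
  linarith

theorem norm_le_of_add_sub_smul_eq {E : Type*} [NormedAddCommGroup E] [NormedSpace ℂ E]
    {ψ φ x y : E} {z : ℂ} {a K s : ℝ} (h : x + y - z • ψ = φ) (hs : 1 ≤ s)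
    (hψ : ‖ψ‖ ≤ a * ‖φ‖) (hx : ‖x‖ ≤ K * s * ‖φ‖) : ‖y‖ ≤ (1 + ‖z‖ * a + K) * s * ‖φ‖ := by
  have hy : ‖y‖ ≤ ‖φ‖ + ‖x‖ + ‖z‖ * ‖ψ‖ := by
    have hyeq : y = φ + -x + z • ψ := by rw [← h]; abel
    simpa only [hyeq, norm_neg, norm_smul] using norm_add₃_le (a := φ) (b := -x) (c := z • ψ)
  have hφ : ‖φ‖ ≤ s * ‖φ‖ := le_mul_of_one_le_left (norm_nonneg _) hs
  have hzψ : ‖z‖ * ‖ψ‖ ≤ ‖z‖ * a * (s * ‖φ‖) :=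
    calc ‖z‖ * ‖ψ‖ ≤ ‖z‖ * (a * ‖φ‖) := by gcongr
      _ ≤ ‖z‖ * ((a * ‖φ‖) * s) :=
        mul_le_mul_of_nonneg_left (le_mul_of_one_le_right ((norm_nonneg ψ).trans hψ) hs)
          (norm_nonneg z)
      _ = ‖z‖ * a * (s * ‖φ‖) := by ring
  linarith

namespace DiscreteSchrodinger

open lp

variable {ν : ℕ}

noncomputable def fwdDiff (i : Fin ν) (ψ : LatticeL2 ν) : LatticeL2 ν :=
  shift (Pi.single i 1) ψ - ψ

/-- `-Δ_d = ℓ⁻² Σ_i D_i^* D_i`, where `D_i = fwdDiff i` has adjoint `shift (-eᵢ) - 1`. -/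
noncomputable def negLap (ℓ : ℝ) (ψ : LatticeL2 ν) : LatticeL2 ν :=
  ((ℓ : ℂ) ^ 2)⁻¹ • ∑ i, (shift (-Pi.single i 1) (fwdDiff i ψ) - fwdDiff i ψ)

noncomputable def lapForm (ℓ : ℝ) (ψ : LatticeL2 ν) : ℝ :=
  (ℓ ^ 2)⁻¹ * ∑ i, ‖fwdDiff i ψ‖ ^ 2

theorem fwdDiff_apply (i : Fin ν) (ψ : LatticeL2 ν) (j : Fin ν → ℤ) :
    fwdDiff i ψ j = ψ (j + Pi.single i 1) - ψ j := by
  rw [fwdDiff, lp.coeFn_sub, Pi.sub_apply, shift_apply]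

theorem negLap_apply (ℓ : ℝ) (ψ : LatticeL2 ν) (j : Fin ν → ℤ) :
    negLap ℓ ψ j = -discreteLapPt ν ℓ ψ j := by
  simp only [negLap, discreteLapPt, lp.coeFn_smul, lp.coeFn_sum, lp.coeFn_sub, Pi.smul_apply,
    Finset.sum_apply, Pi.sub_apply, shift_apply, fwdDiff_apply, smul_eq_mul,
    ← sub_eq_add_neg, sub_add_cancel, Complex.ofReal_pow, Complex.ofReal_inv]
  rw [← mul_neg, ← Finset.sum_neg_distrib]
  congr 1
  exact Finset.sum_congr rfl fun i _ => by ring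

theorem inner_negLap_self (ℓ : ℝ) (ψ : LatticeL2 ν) : ⟪ψ, negLap ℓ ψ⟫ = lapForm ℓ ψ := by
  have hD (i : Fin ν) : shift (Pi.single i 1) ψ - ψ = fwdDiff i ψ := rfl
  simp only [negLap, lapForm, inner_smul_right, inner_sum, inner_sub_right, inner_shift_neg,
    ← inner_sub_left, hD, inner_self_eq_norm_sq_to_K]
  push_cast
  rfl

theorem norm_negLap_le {ℓ : ℝ} (hℓ : 0 < ℓ) (ψ : LatticeL2 ν) :
    ‖negLap ℓ ψ‖ ≤ 2 * ν * ℓ⁻¹ * √(lapForm ℓ ψ) := by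
  set S := ∑ i, ‖fwdDiff i ψ‖ ^ 2
  have hdiff (i : Fin ν) : ‖fwdDiff i ψ‖ ≤ √S :=
    Real.le_sqrt_of_sq_le (Finset.single_le_sum (fun i _ => sq_nonneg ‖fwdDiff i ψ‖)
      (Finset.mem_univ i))
  have hsum : ‖∑ i, (shift (-Pi.single i 1) (fwdDiff i ψ) - fwdDiff i ψ)‖ ≤ 2 * ν * √S :=
    calc _ ≤ ∑ i, ‖shift (-Pi.single i 1) (fwdDiff i ψ) - fwdDiff i ψ‖ := norm_sum_le _ _
      _ ≤ ∑ _i : Fin ν, 2 * √S := Finset.sum_le_sum fun i _ => by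
          linarith [norm_sub_le (shift (-Pi.single i 1) (fwdDiff i ψ)) (fwdDiff i ψ),
            norm_shift (-Pi.single i 1) (fwdDiff i ψ), hdiff i]
      _ = 2 * ν * √S := by
          rw [Finset.sum_const, Finset.card_univ, Fintype.card_fin, nsmul_eq_mul]; ring
  have hform : √(lapForm ℓ ψ) = ℓ⁻¹ * √S := by
    rw [lapForm, ← inv_pow, Real.sqrt_mul (by positivity), Real.sqrt_sq (by positivity)]
  rw [hform, negLap, norm_smul, norm_inv, norm_pow, Complex.norm_real, Real.norm_of_nonneg hℓ.le]
  calc (ℓ ^ 2)⁻¹ * _ ≤ (ℓ ^ 2)⁻¹ * (2 * ν * √S) := by gcongr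
    _ = _ := by ring

theorem norm_negLap_le_of_resolvent {ℓ a m : ℝ} {z : ℂ} (hℓ : 0 < ℓ) (ha : 0 ≤ a)
    {w : (Fin ν → ℤ) → ℝ} (hw : ∀ j, m ≤ w j) {ψ φ χ : LatticeL2 ν} (hχ : ∀ j, χ j = w j * ψ j)
    (h : negLap ℓ ψ + χ - z • ψ = φ) (hψ : ‖ψ‖ ≤ a * ‖φ‖) :
    ‖negLap ℓ ψ‖ ≤ 2 * ν * √(a + |z.re - m| * a ^ 2) * ℓ⁻¹ * ‖φ‖ := by
  have hform : lapForm ℓ ψ ≤ (a + |z.re - m| * a ^ 2) * ‖φ‖ ^ 2 := by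
    have h0 := form_le_of_add_sub_smul_eq h (inner_negLap_self ℓ ψ)
      (mul_norm_sq_le_re_inner hw hχ)
    have h1 : ‖ψ‖ * ‖φ‖ ≤ a * ‖φ‖ ^ 2 := by nlinarith [norm_nonneg φ]
    have h2 : (z.re - m) * ‖ψ‖ ^ 2 ≤ |z.re - m| * (a * ‖φ‖) ^ 2 :=
      mul_le_mul (le_abs_self _) (pow_le_pow_left₀ (norm_nonneg ψ) hψ 2) (sq_nonneg _)
        (abs_nonneg _)
    nlinarith
  have hsqrt : √(lapForm ℓ ψ) ≤ √(a + |z.re - m| * a ^ 2) * ‖φ‖ := by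
    rw [← Real.sqrt_sq (norm_nonneg φ), ← Real.sqrt_mul (by positivity)]
    exact Real.sqrt_le_sqrt hform
  calc ‖negLap ℓ ψ‖ ≤ 2 * ν * ℓ⁻¹ * √(lapForm ℓ ψ) := norm_negLap_le hℓ ψ
    _ ≤ 2 * ν * ℓ⁻¹ * (√(a + |z.re - m| * a ^ 2) * ‖φ‖) := by gcongr
    _ = _ := by ring

end DiscreteSchrodinger

open DiscreteSchrodinger

theorem stmt_11_general (ν : ℕ) (V : (Fin ν → ℝ) → ℝ) (hV : ∃ m : ℝ, ∀ x, m ≤ V x)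
    (z : ℂ) :
    ∃ C > (0 : ℝ), ∀ ℓ : ℝ, 0 < ℓ → ℓ ≤ 1 →
      ∀ R : LatticeL2 ν →L[ℂ] LatticeL2 ν, ‖R‖ ≤ |z.im|⁻¹ →
        (∀ φ : LatticeL2 ν,
          Memℓp (fun j : Fin ν → ℤ => (V (fun i => ℓ * (j i : ℝ)) : ℂ) * R φ j) 2) →
        (∀ (φ : LatticeL2 ν) (j : Fin ν → ℤ),
          discreteSchrodingerPt ν ℓ V (R φ : (Fin ν → ℤ) → ℂ) j - z * R φ j = φ j) →
        ∀ φ : LatticeL2 ν,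
          (∑' j : Fin ν → ℤ, ‖discreteLapPt ν ℓ (R φ : (Fin ν → ℤ) → ℂ) j‖ ^ 2) ≤
              (C * ℓ⁻¹ * ‖φ‖) ^ 2 ∧
          (∑' j : Fin ν → ℤ, ‖(V (fun i => ℓ * (j i : ℝ)) : ℂ) * R φ j‖ ^ 2) ≤
              (C * ℓ⁻¹ * ‖φ‖) ^ 2 := by
  obtain ⟨m, hm⟩ := hV
  set a := |z.im|⁻¹
  set K := 2 * ν * √(a + |z.re - m| * a ^ 2)
  refine ⟨1 + ‖z‖ * a + K, by positivity, fun ℓ hℓ hℓ1 R hR hdom heq φ => ?_⟩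
  set ψ := R φ
  let χ : LatticeL2 ν := ⟨_, hdom φ⟩
  have hψ : ‖ψ‖ ≤ a * ‖φ‖ := R.le_of_opNorm_le hR φ
  have hres : negLap ℓ ψ + χ - z • ψ = φ := lp.ext <| funext fun j => by
    simp only [lp.coeFn_sub, lp.coeFn_add, lp.coeFn_smul, Pi.sub_apply, Pi.add_apply,
      Pi.smul_apply, smul_eq_mul, negLap_apply]
    exact heq φ j
  have hΔ : ‖negLap ℓ ψ‖ ≤ K * ℓ⁻¹ * ‖φ‖ :=
    norm_negLap_le_of_resolvent hℓ (by positivity) (fun _ => hm _) (fun _ => rfl) hres hψ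
  have hχ : ‖χ‖ ≤ (1 + ‖z‖ * a + K) * ℓ⁻¹ * ‖φ‖ :=
    norm_le_of_add_sub_smul_eq hres (one_le_inv_iff₀.mpr ⟨hℓ, hℓ1⟩) hψ hΔ
  have hΔsum : ∑' j, ‖discreteLapPt ν ℓ ψ j‖ ^ 2 = ‖negLap ℓ ψ‖ ^ 2 := by
    simpa only [negLap_apply, norm_neg] using (lp.hasSum_norm_sq (negLap ℓ ψ)).tsum_eq
  have hχsum : ∑' j, ‖χ j‖ ^ 2 = ‖χ‖ ^ 2 := (lp.hasSum_norm_sq χ).tsum_eq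
  refine ⟨hΔsum ▸ pow_le_pow_left₀ (norm_nonneg _) (hΔ.trans ?_) 2,
    hχsum ▸ pow_le_pow_left₀ (norm_nonneg _) hχ 2⟩
  gcongr
  linarith [show 0 ≤ ‖z‖ * a by positivity]

/-- if `V` is bounded below and `H₂ = -Δ_d + V` is the (self-adjoint) discrete
Schrödinger operator on `ℓ²(ℓℤ^ν)` with `0 < ℓ ≤ 1`, then for every non-real `z` there is a
constant `C > 0`, independent of `ℓ`, such that `‖Δ_d (H₂ - z)⁻¹‖ ≤ C ℓ⁻¹` and
`‖V (H₂ - z)⁻¹‖ ≤ C ℓ⁻¹`.  The resolvent `R = (H₂ - z)⁻¹` is characterised by the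
hypotheses: `R` is bounded with `‖R‖ ≤ |Im z|⁻¹`, `R φ` lies in the domain of `H₂`
(i.e. `V·(R φ) ∈ ℓ²`), and `(H₂ - z) R φ = φ` pointwise.  The operator norm bounds are
expressed through `ℓ²`-sums: `Σ_j |Δ_d(Rφ)_j|² ≤ (Cℓ⁻¹‖φ‖)²` and similarly for `V`. -/
theorem stmt_11 (ν : ℕ) (hν : 1 ≤ ν) (V : (Fin ν → ℝ) → ℝ) (hV : ∃ m : ℝ, ∀ x, m ≤ V x)
    (z : ℂ) (hz : z.im ≠ 0) :
    ∃ C > (0 : ℝ), ∀ ℓ : ℝ, 0 < ℓ → ℓ ≤ 1 →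
      ∀ R : LatticeL2 ν →L[ℂ] LatticeL2 ν, ‖R‖ ≤ |z.im|⁻¹ →
        (∀ φ : LatticeL2 ν,
          Memℓp (fun j : Fin ν → ℤ => (V (fun i => ℓ * (j i : ℝ)) : ℂ) * R φ j) 2) →
        (∀ (φ : LatticeL2 ν) (j : Fin ν → ℤ),
          discreteSchrodingerPt ν ℓ V (R φ : (Fin ν → ℤ) → ℂ) j - z * R φ j = φ j) →
        ∀ φ : LatticeL2 ν,
          (∑' j : Fin ν → ℤ, ‖discreteLapPt ν ℓ (R φ : (Fin ν → ℤ) → ℂ) j‖ ^ 2) ≤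
              (C * ℓ⁻¹ * ‖φ‖) ^ 2 ∧
          (∑' j : Fin ν → ℤ, ‖(V (fun i => ℓ * (j i : ℝ)) : ℂ) * R φ j‖ ^ 2) ≤
              (C * ℓ⁻¹ * ‖φ‖) ^ 2 :=
  stmt_11_general ν V hV z
end

section
/- Let H₁, H₂ be Hilbert spaces, and for each ℓ > 0 let T_ℓ, S_ℓ be bounded operators and J : H₂ → H₁ bounded, with M₁(ℓ), M₂(ℓ) bounded operators on H₂ satisfying ‖S_ℓ M₁(ℓ)‖ ≤ Cℓ and ‖S_ℓ M₂(ℓ)‖ ≤ Cℓ, where S_ℓ = (A - z)^{-1} for a self-adjoint operator A on H₂ and z ∉ ℝ. If (A - z + M₁(ℓ)) K T_ℓ J = 1 + M₂(ℓ) for a bounded operator K, then for all sufficiently small ℓ, 1 + S_ℓ M₁(ℓ) is invertible and K T_ℓ J - S_ℓ = -(1 + S_ℓ M₁(ℓ))^{-1}(S_ℓ M₁(ℓ) S_ℓ - S_ℓ M₂(ℓ)); in particular ‖K T_ℓ J - (A - z)^{-1}‖ = O(ℓ) as ℓ → 0. -/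
/-! The hypothesis rearranges to `(1 + S M₁) (K T J - S) = S M₂ - S M₁ S`.
Once `‖S M₁‖ ≤ 1/2`, the Neumann series inverts `1 + S M₁` with an inverse of norm at most `2`, and both terms on the right are `O(ℓ)`. -/

section NormedRing

variable {R : Type*} [NormedRing R]

theorem norm_le_div_of_mul_one_add_eq_one {a x : R} (hx : x * (1 + a) = 1) (ha : ‖a‖ < 1) :
    ‖x‖ ≤ ‖(1 : R)‖ / (1 - ‖a‖) := by
  have hx' : x = 1 - x * a := by rw [eq_sub_iff_add_eq, ← mul_one_add, hx]
  have : ‖x‖ ≤ ‖(1 : R)‖ + ‖x‖ * ‖a‖ :=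
    calc ‖x‖ = ‖1 - x * a‖ := congrArg norm hx'
      _ ≤ ‖(1 : R)‖ + ‖x * a‖ := norm_sub_le _ _
      _ ≤ ‖(1 : R)‖ + ‖x‖ * ‖a‖ := by gcongr; exact norm_mul_le _ _
  rw [le_div_iff₀ (by linarith)]
  linarith

theorem sub_eq_neg_mul_of_one_add_mul_eq {a b s x u : R} (hu : u * (1 + a) = 1)
    (h : (1 + a) * x = s + b) : x - s = -(u * (a * s - b)) := by
  have hfactor : (1 + a) * (x - s) = -(a * s - b) := by rw [mul_sub, h]; noncomm_ring
  calc x - s = u * ((1 + a) * (x - s)) := by rw [← mul_assoc, hu, one_mul]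
    _ = -(u * (a * s - b)) := by rw [hfactor, mul_neg]

theorem exists_unit_one_add_sub_eq_of_norm_le_half [CompleteSpace R] {a b s x : R}
    (ha : ‖a‖ ≤ 1 / 2) (h : (1 + a) * x = s + b) :
    ∃ u : Rˣ, (u : R) = 1 + a ∧ x - s = -(↑u⁻¹ * (a * s - b)) ∧
      ‖x - s‖ ≤ 2 * ‖(1 : R)‖ * (‖a‖ * ‖s‖ + ‖b‖) := by
  have ha' : ‖-a‖ < 1 := by rw [norm_neg]; linarith
  set u := Units.oneSub (-a) ha'
  have hu : (u : R) = 1 + a := by rw [Units.val_oneSub, sub_neg_eq_add]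
  have hinv : (↑u⁻¹ : R) * (1 + a) = 1 := hu ▸ u.inv_mul
  have hdiff := sub_eq_neg_mul_of_one_add_mul_eq hinv h
  have hinv_norm : ‖(↑u⁻¹ : R)‖ ≤ 2 * ‖(1 : R)‖ :=
    calc ‖(↑u⁻¹ : R)‖ ≤ ‖(1 : R)‖ / (1 - ‖a‖) :=
          norm_le_div_of_mul_one_add_eq_one hinv (by linarith)
      _ ≤ ‖(1 : R)‖ / (1 / 2) := by gcongr; linarith
      _ = 2 * ‖(1 : R)‖ := by ring
  refine ⟨u, hu, hdiff, ?_⟩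
  calc ‖x - s‖ = ‖(↑u⁻¹ : R) * (a * s - b)‖ := by rw [hdiff, norm_neg]
    _ ≤ ‖(↑u⁻¹ : R)‖ * ‖a * s - b‖ := norm_mul_le _ _
    _ ≤ ‖(↑u⁻¹ : R)‖ * (‖a * s‖ + ‖b‖) := by gcongr; exact norm_sub_le _ _
    _ ≤ ‖(↑u⁻¹ : R)‖ * (‖a‖ * ‖s‖ + ‖b‖) := by gcongr; exact norm_mul_le _ _
    _ ≤ 2 * ‖(1 : R)‖ * (‖a‖ * ‖s‖ + ‖b‖) := by gcongr

end NormedRing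

theorem stmt_12_general
    {H₁ H₂ : Type*}
    [NormedAddCommGroup H₁] [InnerProductSpace ℂ H₁]
    [NormedAddCommGroup H₂] [InnerProductSpace ℂ H₂] [CompleteSpace H₂]
    (z : ℂ)
    (T : ℝ → (H₁ →L[ℂ] H₁)) (J : ℝ → (H₂ →L[ℂ] H₁)) (K : ℝ → (H₁ →L[ℂ] H₂))
    (M₁ M₂ S : ℝ → (H₂ →L[ℂ] H₂))
    (C : ℝ) (hC : 0 < C)
    (hSnorm : ∀ ℓ : ℝ, 0 < ℓ → ‖S ℓ‖ ≤ |z.im|⁻¹)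
    (hM₁ : ∀ ℓ : ℝ, 0 < ℓ → ‖S ℓ ∘L M₁ ℓ‖ ≤ C * ℓ)
    (hM₂ : ∀ ℓ : ℝ, 0 < ℓ → ‖S ℓ ∘L M₂ ℓ‖ ≤ C * ℓ)
    (hid : ∀ ℓ : ℝ, 0 < ℓ →
      (1 + S ℓ ∘L M₁ ℓ) ∘L (K ℓ ∘L T ℓ ∘L J ℓ) = S ℓ ∘L (1 + M₂ ℓ)) :
    ∃ C' > (0 : ℝ), ∃ ℓ₀ > (0 : ℝ), ∀ ℓ : ℝ, 0 < ℓ → ℓ ≤ ℓ₀ →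
      ∃ U : H₂ →L[ℂ] H₂,
        U ∘L (1 + S ℓ ∘L M₁ ℓ) = 1 ∧
        (1 + S ℓ ∘L M₁ ℓ) ∘L U = 1 ∧
        K ℓ ∘L T ℓ ∘L J ℓ - S ℓ =
          -(U ∘L ((S ℓ ∘L M₁ ℓ) ∘L S ℓ - S ℓ ∘L M₂ ℓ)) ∧
        ‖K ℓ ∘L T ℓ ∘L J ℓ - S ℓ‖ ≤ C' * ℓ := by
  refine ⟨2 * C * (|z.im|⁻¹ + 1), by positivity, (2 * C)⁻¹, by positivity, fun ℓ hℓ hℓ₀ => ?_⟩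
  have hsmall : ‖S ℓ ∘L M₁ ℓ‖ ≤ 1 / 2 :=
    calc ‖S ℓ ∘L M₁ ℓ‖ ≤ C * ℓ := hM₁ ℓ hℓ
      _ ≤ C * (2 * C)⁻¹ := by gcongr
      _ = 1 / 2 := by field_simp
  have hmul : (1 + S ℓ * M₁ ℓ) * (K ℓ ∘L T ℓ ∘L J ℓ) = S ℓ + S ℓ * M₂ ℓ :=
    calc _ = S ℓ * (1 + M₂ ℓ) := hid ℓ hℓ
      _ = S ℓ + S ℓ * M₂ ℓ := by rw [mul_add, mul_one]
  obtain ⟨u, hu, hdiff, hnorm⟩ := exists_unit_one_add_sub_eq_of_norm_le_half hsmall hmul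
  refine ⟨↑u⁻¹, hu ▸ u.inv_mul, hu ▸ u.mul_inv, hdiff, ?_⟩
  calc ‖K ℓ ∘L T ℓ ∘L J ℓ - S ℓ‖
      ≤ 2 * ‖(1 : H₂ →L[ℂ] H₂)‖ * (‖S ℓ ∘L M₁ ℓ‖ * ‖S ℓ‖ + ‖S ℓ ∘L M₂ ℓ‖) := hnorm
    _ ≤ 2 * 1 * (C * ℓ * |z.im|⁻¹ + C * ℓ) := by
        gcongr
        · exact ContinuousLinearMap.norm_id_le
        · exact hM₁ ℓ hℓ
        · exact hSnorm ℓ hℓ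
        · exact hM₂ ℓ hℓ
    _ = 2 * C * (|z.im|⁻¹ + 1) * ℓ := by ring

/-- abstract resolvent-comparison lemma.  For each `ℓ > 0` let
`T ℓ : H₁ → H₁`, `J ℓ : H₂ → H₁`, `K ℓ : H₁ → H₂` be bounded, `M₁ ℓ, M₂ ℓ` bounded on `H₂`,
and let `S ℓ = (A - z)⁻¹` be the resolvent of a self-adjoint operator `A` on `H₂`
(`z ∉ ℝ`, so `‖S ℓ‖ ≤ |Im z|⁻¹`), with `‖S ℓ ∘ M₁ ℓ‖ ≤ Cℓ` and `‖S ℓ ∘ M₂ ℓ‖ ≤ Cℓ`.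
If `(A - z + M₁ ℓ) ∘ K ℓ ∘ T ℓ ∘ J ℓ = 1 + M₂ ℓ` — which, after multiplying by the
resolvent, reads `(1 + S ℓ M₁ ℓ) ∘ (K ℓ T ℓ J ℓ) = S ℓ ∘ (1 + M₂ ℓ)` — then for all
sufficiently small `ℓ` the operator `1 + S ℓ M₁ ℓ` is invertible, with inverse `U`, and
`K ℓ T ℓ J ℓ - S ℓ = -(U ∘ (S ℓ M₁ ℓ S ℓ - S ℓ M₂ ℓ))`; in particular
`‖K ℓ T ℓ J ℓ - (A - z)⁻¹‖ = O(ℓ)` as `ℓ → 0`. -/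
theorem stmt_12
    {H₁ H₂ : Type*}
    [NormedAddCommGroup H₁] [InnerProductSpace ℂ H₁] [CompleteSpace H₁]
    [NormedAddCommGroup H₂] [InnerProductSpace ℂ H₂] [CompleteSpace H₂]
    (z : ℂ) (hz : z.im ≠ 0)
    (T : ℝ → (H₁ →L[ℂ] H₁)) (J : ℝ → (H₂ →L[ℂ] H₁)) (K : ℝ → (H₁ →L[ℂ] H₂))
    (M₁ M₂ S : ℝ → (H₂ →L[ℂ] H₂))
    (C : ℝ) (hC : 0 < C)
    (hSnorm : ∀ ℓ : ℝ, 0 < ℓ → ‖S ℓ‖ ≤ |z.im|⁻¹)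
    (hM₁ : ∀ ℓ : ℝ, 0 < ℓ → ‖S ℓ ∘L M₁ ℓ‖ ≤ C * ℓ)
    (hM₂ : ∀ ℓ : ℝ, 0 < ℓ → ‖S ℓ ∘L M₂ ℓ‖ ≤ C * ℓ)
    (hid : ∀ ℓ : ℝ, 0 < ℓ →
      (1 + S ℓ ∘L M₁ ℓ) ∘L (K ℓ ∘L T ℓ ∘L J ℓ) = S ℓ ∘L (1 + M₂ ℓ)) :
    ∃ C' > (0 : ℝ), ∃ ℓ₀ > (0 : ℝ), ∀ ℓ : ℝ, 0 < ℓ → ℓ ≤ ℓ₀ →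
      ∃ U : H₂ →L[ℂ] H₂,
        U ∘L (1 + S ℓ ∘L M₁ ℓ) = 1 ∧
        (1 + S ℓ ∘L M₁ ℓ) ∘L U = 1 ∧
        K ℓ ∘L T ℓ ∘L J ℓ - S ℓ =
          -(U ∘L ((S ℓ ∘L M₁ ℓ) ∘L S ℓ - S ℓ ∘L M₂ ℓ)) ∧
        ‖K ℓ ∘L T ℓ ∘L J ℓ - S ℓ‖ ≤ C' * ℓ :=
  stmt_12_general z T J K M₁ M₂ S C hC hSnorm hM₁ hM₂ hid
end
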